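/- (Corollary: SO1 is equivalent to SO2.) The probability measure μ satisfies the condition SO1 if and only if it satisfies the condition SO2. -/
import Mathlib


open Set MeasureTheory

/-- A least-domain-of-decidability function `dom : Σ → 𝒫(𝕊)`, with its four
defining properties (i)–(iv).  Events are the measurable subsets of `Ω`. -/
structure DomSystem (Ω S : Type*) [MeasurableSpace Ω] where
  dom : Set Ω → Set S
  /-- (i): for a countable family of events whose domains are pairwise disjoint,
  the domain of the intersection is the (disjoint) union of the domains. -/
  prop_i : ∀ Λ : Set (Set Ω), Λ.Countable → (∀ X ∈ Λ, MeasurableSet X) →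
    (∀ X ∈ Λ, ∀ Y ∈ Λ, X ≠ Y → Disjoint (dom X) (dom Y)) →
    dom (⋂₀ Λ) = ⋃ X ∈ Λ, dom X
  /-- (ii): for a countable family of events all having the same domain `D`,
  the domain of the intersection is contained in `D`. -/
  prop_ii : ∀ (Λ : Set (Set Ω)) (D : Set S), Λ.Countable →
    (∀ X ∈ Λ, MeasurableSet X) → (∀ X ∈ Λ, dom X = D) → dom (⋂₀ Λ) ⊆ D
  /-- (iii): complementation preserves the domain. -/
  prop_iii : ∀ X : Set Ω, MeasurableSet X → dom Xᶜ = dom X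
  /-- (iv): an event whose domain is a disjoint union `𝒳 ⊔ 𝒴` lies in the σ-algebra
  generated by `Γ(𝒳) ∪ Γ(𝒴)`, where `Γ(𝒳) = {X ∈ Σ : dom X ⊆ 𝒳}`. -/
  prop_iv : ∀ Z : Set Ω, MeasurableSet Z → ∀ 𝒳 𝒴 : Set S, Disjoint 𝒳 𝒴 →
    dom Z = 𝒳 ∪ 𝒴 →
    MeasurableSet[MeasurableSpace.generateFrom
      ({X : Set Ω | MeasurableSet X ∧ dom X ⊆ 𝒳} ∪
        {X : Set Ω | MeasurableSet X ∧ dom X ⊆ 𝒴})] Z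

/-- A full specification of a region `R ⊆ 𝕊`: a nonempty event `F` with `dom F ⊆ R`
that decides every event decidable within `R`. -/
def IsFullSpec {Ω S : Type*} [MeasurableSpace Ω] (dom : Set Ω → Set S)
    (R : Set S) (F : Set Ω) : Prop :=
  MeasurableSet F ∧ F.Nonempty ∧ dom F ⊆ R ∧
    ∀ X : Set Ω, MeasurableSet X → dom X ⊆ R → F ⊆ X ∨ F ⊆ Xᶜ

/-- The restriction `Γ_R(A)` of an event `A` to a region `R`: the intersection of all
events `Z` with `A ⊆ Z` and `dom Z ⊆ R`. -/
def restr {Ω S : Type*} [MeasurableSpace Ω] (dom : Set Ω → Set S)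
    (R : Set S) (A : Set Ω) : Set Ω :=
  ⋂₀ {Z : Set Ω | MeasurableSet Z ∧ A ⊆ Z ∧ dom Z ⊆ R}

/-- The causal past `J⁻(𝒳)` of a region in the causal structure `𝕊`. -/
def causalPast {S : Type*} [PartialOrder S] (𝒳 : Set S) : Set S :=
  {s | ∃ x ∈ 𝒳, s ≤ x}

/-- Two regions are spacelike, `𝒳 ♮ 𝒴`, if `J⁻(𝒳) ∩ 𝒴 = ∅` and `J⁻(𝒴) ∩ 𝒳 = ∅`. -/
def Spacelike {S : Type*} [PartialOrder S] (𝒳 𝒴 : Set S) : Prop :=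
  causalPast 𝒳 ∩ 𝒴 = ∅ ∧ causalPast 𝒴 ∩ 𝒳 = ∅

/-- Screening off, SO1: for all events `A`, `B` occurring in spacelike regions `𝒜 ♮ ℬ`,
`μ(A ∩ B | C) = μ(A | C)·μ(B | C)` for every full specification `C` of the mutual past
`𝒫₁ = J⁻(𝒜) ∩ J⁻(ℬ)` with `μ C > 0`. -/
def SO1 {Ω S : Type*} [MeasurableSpace Ω] [PartialOrder S]
    (dom : Set Ω → Set S) (μ : MeasureTheory.Measure Ω) : Prop :=
  ∀ A B : Set Ω, MeasurableSet A → MeasurableSet B →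
    ∀ 𝒜 ℬ : Set S, dom A ⊆ 𝒜 → dom B ⊆ ℬ → Spacelike 𝒜 ℬ →
      ∀ C : Set Ω, IsFullSpec dom (causalPast 𝒜 ∩ causalPast ℬ) C → 0 < μ C →
        μ ((A ∩ B) ∩ C) / μ C = (μ (A ∩ C) / μ C) * (μ (B ∩ C) / μ C)

/-- Screening off, SO2: as SO1, but conditioning on full specifications of the joint
past `𝒫₂ = (J⁻(𝒜) ∪ J⁻(ℬ)) \ (𝒜 ∪ ℬ)`. -/
def SO2 {Ω S : Type*} [MeasurableSpace Ω] [PartialOrder S]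
    (dom : Set Ω → Set S) (μ : MeasureTheory.Measure Ω) : Prop :=
  ∀ A B : Set Ω, MeasurableSet A → MeasurableSet B →
    ∀ 𝒜 ℬ : Set S, dom A ⊆ 𝒜 → dom B ⊆ ℬ → Spacelike 𝒜 ℬ →
      ∀ C : Set Ω,
        IsFullSpec dom ((causalPast 𝒜 ∪ causalPast ℬ) \ (𝒜 ∪ ℬ)) C → 0 < μ C →
          μ ((A ∩ B) ∩ C) / μ C = (μ (A ∩ C) / μ C) * (μ (B ∩ C) / μ C)

section Aux

variable {Ω S : Type*} [MeasurableSpace Ω]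

lemma subset_restr (dom : Set Ω → Set S) (R : Set S) (A : Set Ω) :
    A ⊆ restr dom R A :=
  subset_sInter fun _ hZ => hZ.2.1

lemma restr_subset (dom : Set Ω → Set S) {R : Set S} {A Z : Set Ω}
    (hZ : MeasurableSet Z) (hAZ : A ⊆ Z) (hd : dom Z ⊆ R) :
    restr dom R A ⊆ Z :=
  sInter_subset_of_mem ⟨hZ, hAZ, hd⟩

lemma restr_mono (dom : Set Ω → Set S) (R : Set S) {A B : Set Ω} (h : A ⊆ B) :
    restr dom R A ⊆ restr dom R B :=
  subset_sInter fun Z hZ => sInter_subset_of_mem ⟨hZ.1, h.trans hZ.2.1, hZ.2.2⟩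

lemma isFullSpec_restr (D : DomSystem Ω S)
    (hres : ∀ A : Set Ω, MeasurableSet A → ∀ R : Set S,
      MeasurableSet (restr D.dom R A) ∧ D.dom (restr D.dom R A) ⊆ R)
    {R R' : Set S} {C : Set Ω} (hC : IsFullSpec D.dom R C) (hR' : R' ⊆ R) :
    IsFullSpec D.dom R' (restr D.dom R' C) := by
  obtain ⟨hm, hne, hd, hdec⟩ := hC
  refine ⟨(hres C hm R').1, hne.mono (subset_restr _ _ _), (hres C hm R').2, ?_⟩
  intro X hX hdX
  rcases hdec X hX (hdX.trans hR') with h | h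
  · exact Or.inl (restr_subset _ hX h hdX)
  · exact Or.inr (restr_subset _ hX.compl h (by rw [D.prop_iii X hX]; exact hdX))

lemma restr_restr (D : DomSystem Ω S)
    (hres : ∀ A : Set Ω, MeasurableSet A → ∀ R : Set S,
      MeasurableSet (restr D.dom R A) ∧ D.dom (restr D.dom R A) ⊆ R)
    {R' : Set S} (X : Set S) (hX : X ⊆ R') {C : Set Ω} (hm : MeasurableSet C) :
    restr D.dom X (restr D.dom R' C) = restr D.dom X C := by
  apply Subset.antisymm
  · exact restr_subset _ (hres C hm X).1
      (restr_subset _ (hres C hm X).1 (subset_restr _ _ _) ((hres C hm X).2.trans hX))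
      (hres C hm X).2
  · exact restr_mono _ _ (subset_restr _ _ _)

lemma dom_inter (D : DomSystem Ω S)
    (hres : ∀ A : Set Ω, MeasurableSet A → ∀ R : Set S,
      MeasurableSet (restr D.dom R A) ∧ D.dom (restr D.dom R A) ⊆ R)
    {X Y : Set Ω} {R : Set S} (hX : MeasurableSet X) (hY : MeasurableSet Y)
    (hdX : D.dom X ⊆ R) (hdY : D.dom Y ⊆ R) : D.dom (X ∩ Y) ⊆ R := by
  have h : restr D.dom R (X ∩ Y) = X ∩ Y :=
    Subset.antisymm (subset_inter (restr_subset _ hX inter_subset_left hdX)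
      (restr_subset _ hY inter_subset_right hdY)) (subset_restr _ _ _)
  rw [← h]; exact (hres _ (hX.inter hY) R).2

lemma decided_of_generate {G : Set (Set Ω)} {C F : Set Ω}
    (hne : C.Nonempty)
    (hG : ∀ X ∈ G, (C ⊆ X ∧ F ⊆ X) ∨ (C ⊆ Xᶜ ∧ F ⊆ Xᶜ)) {Z : Set Ω}
    (hZ : MeasurableSet[MeasurableSpace.generateFrom G] Z) :
    (C ⊆ Z ∧ F ⊆ Z) ∨ (C ⊆ Zᶜ ∧ F ⊆ Zᶜ) := by
  induction hZ with
  | basic u hu => exact hG u hu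
  | empty => exact Or.inr ⟨by simp, by simp⟩
  | compl u _ ih =>
      rcases ih with h | h
      · exact Or.inr ⟨by simpa using h.1, by simpa using h.2⟩
      · exact Or.inl h
  | iUnion f _ ih =>
      by_cases h : ∃ n, C ⊆ f n
      · obtain ⟨n, hn⟩ := h
        rcases ih n with h' | h'
        · exact Or.inl ⟨hn.trans (subset_iUnion f n), h'.2.trans (subset_iUnion f n)⟩
        · obtain ⟨ω, hω⟩ := hne
          exact absurd (hn hω) (h'.1 hω)
      · push_neg at h
        have h' : ∀ n, C ⊆ (f n)ᶜ ∧ F ⊆ (f n)ᶜ :=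
          fun n => (ih n).resolve_left (fun hl => h n hl.1)
        refine Or.inr ⟨?_, ?_⟩ <;>
        · intro x hx
          simp only [mem_compl_iff, mem_iUnion, not_exists]
          intro n
          first
            | exact (h' n).1 hx
            | exact (h' n).2 hx

lemma fullSpec_split (D : DomSystem Ω S) {R X Y : Set S} {C : Set Ω}
    (hC : IsFullSpec D.dom R C) (hdisj : Disjoint X Y) (hR : R = X ∪ Y) :
    C = restr D.dom X C ∩ restr D.dom Y C := by
  obtain ⟨hm, hne, hd, hdec⟩ := hC
  refine Subset.antisymm (subset_inter (subset_restr _ _ _) (subset_restr _ _ _)) ?_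
  have hdom : D.dom C = (D.dom C ∩ X) ∪ (D.dom C ∩ Y) := by
    rw [← inter_union_distrib_left, inter_eq_left.mpr (by rw [← hR]; exact hd)]
  have h4 := D.prop_iv C hm _ _ (hdisj.mono inter_subset_right inter_subset_right) hdom
  have hgen : ∀ W ∈ ({W : Set Ω | MeasurableSet W ∧ D.dom W ⊆ D.dom C ∩ X} ∪
      {W : Set Ω | MeasurableSet W ∧ D.dom W ⊆ D.dom C ∩ Y}),
      (C ⊆ W ∧ restr D.dom X C ∩ restr D.dom Y C ⊆ W) ∨
      (C ⊆ Wᶜ ∧ restr D.dom X C ∩ restr D.dom Y C ⊆ Wᶜ) := by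
    rintro W (⟨hWm, hWd⟩ | ⟨hWm, hWd⟩)
    · have hWX : D.dom W ⊆ X := hWd.trans inter_subset_right
      rcases hdec W hWm (hWX.trans (by rw [hR]; exact subset_union_left)) with h | h
      · exact Or.inl ⟨h, inter_subset_left.trans (restr_subset _ hWm h hWX)⟩
      · exact Or.inr ⟨h, inter_subset_left.trans (restr_subset _ hWm.compl h
          (by rw [D.prop_iii W hWm]; exact hWX))⟩
    · have hWY : D.dom W ⊆ Y := hWd.trans inter_subset_right
      rcases hdec W hWm (hWY.trans (by rw [hR]; exact subset_union_right)) with h | h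
      · exact Or.inl ⟨h, inter_subset_right.trans (restr_subset _ hWm h hWY)⟩
      · exact Or.inr ⟨h, inter_subset_right.trans (restr_subset _ hWm.compl h
          (by rw [D.prop_iii W hWm]; exact hWY))⟩
  rcases decided_of_generate hne hgen h4 with h | h
  · exact h.2
  · obtain ⟨ω, hω⟩ := hne
    exact absurd hω (h.1 hω)

lemma subset_causalPast {S : Type*} [PartialOrder S] (X : Set S) : X ⊆ causalPast X :=
  fun x hx => ⟨x, hx, le_refl x⟩

lemma causalPast_union {S : Type*} [PartialOrder S] (X Y : Set S) :
    causalPast (X ∪ Y) = causalPast X ∪ causalPast Y := by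
  ext s
  simp only [causalPast, mem_union, mem_setOf_eq]
  constructor
  · rintro ⟨x, hx | hx, hs⟩
    · exact Or.inl ⟨x, hx, hs⟩
    · exact Or.inr ⟨x, hx, hs⟩
  · rintro (⟨x, hx, hs⟩ | ⟨x, hx, hs⟩)
    · exact ⟨x, Or.inl hx, hs⟩
    · exact ⟨x, Or.inr hx, hs⟩

lemma causalPast_subset {S : Type*} [PartialOrder S] {X Y : Set S}
    (h : Y ⊆ causalPast X) : causalPast Y ⊆ causalPast X := by
  rintro s ⟨y, hy, hsy⟩
  obtain ⟨x, hx, hyx⟩ := h hy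
  exact ⟨x, hx, hsy.trans hyx⟩

end Aux
section Geom
variable {S : Type*} [PartialOrder S]

lemma causalPast_prime {𝒜 ℬ : Set S} :
    causalPast (𝒜 ∪ (causalPast 𝒜 \ (causalPast ℬ ∪ 𝒜))) = causalPast 𝒜 := by
  rw [causalPast_union]
  exact union_eq_left.mpr (causalPast_subset diff_subset)

lemma spacelike_prime {𝒜 ℬ : Set S} (hsp : Spacelike 𝒜 ℬ) :
    Spacelike (𝒜 ∪ (causalPast 𝒜 \ (causalPast ℬ ∪ 𝒜)))
      (ℬ ∪ (causalPast ℬ \ (causalPast 𝒜 ∪ ℬ))) := by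
  obtain ⟨h1, h2⟩ := hsp
  have hab : ∀ s, s ∈ causalPast 𝒜 → s ∉ ℬ := fun s h hb =>
    (eq_empty_iff_forall_notMem.mp h1 s) ⟨h, hb⟩
  have hba : ∀ s, s ∈ causalPast ℬ → s ∉ 𝒜 := fun s h hb =>
    (eq_empty_iff_forall_notMem.mp h2 s) ⟨h, hb⟩
  constructor
  · rw [causalPast_prime, eq_empty_iff_forall_notMem]
    rintro s ⟨hs, hs'⟩
    rcases hs' with h | ⟨_, h⟩
    · exact hab s hs h
    · exact h (Or.inl hs)
  · rw [show (𝒜 ∪ (causalPast 𝒜 \ (causalPast ℬ ∪ 𝒜))) = _ from rfl]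
    rw [causalPast_prime (ℬ := 𝒜) (𝒜 := ℬ), eq_empty_iff_forall_notMem]
    rintro s ⟨hs, hs'⟩
    rcases hs' with h | ⟨_, h⟩
    · exact hba s hs h
    · exact h (Or.inl hs)

lemma joint_prime {𝒜 ℬ : Set S} (hsp : Spacelike 𝒜 ℬ) :
    (causalPast (𝒜 ∪ (causalPast 𝒜 \ (causalPast ℬ ∪ 𝒜))) ∪
      causalPast (ℬ ∪ (causalPast ℬ \ (causalPast 𝒜 ∪ ℬ)))) \
      ((𝒜 ∪ (causalPast 𝒜 \ (causalPast ℬ ∪ 𝒜))) ∪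
        (ℬ ∪ (causalPast ℬ \ (causalPast 𝒜 ∪ ℬ)))) =
    causalPast 𝒜 ∩ causalPast ℬ := by
  obtain ⟨h1, h2⟩ := hsp
  have hab : ∀ s, s ∈ causalPast 𝒜 → s ∉ ℬ := fun s h hb =>
    (eq_empty_iff_forall_notMem.mp h1 s) ⟨h, hb⟩
  have hba : ∀ s, s ∈ causalPast ℬ → s ∉ 𝒜 := fun s h hb =>
    (eq_empty_iff_forall_notMem.mp h2 s) ⟨h, hb⟩
  rw [causalPast_prime, causalPast_prime (ℬ := 𝒜) (𝒜 := ℬ)]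
  ext s
  have ha := hab s; have hb := hba s
  simp only [mem_diff, mem_union, mem_inter_iff, mem_setOf_eq]
  tauto

lemma split_prime {𝒜 ℬ : Set S} (hsp : Spacelike 𝒜 ℬ) :
    (causalPast 𝒜 ∪ causalPast ℬ) \ (𝒜 ∪ ℬ) =
      ((causalPast 𝒜 ∩ causalPast ℬ) ∪ (causalPast 𝒜 \ (causalPast ℬ ∪ 𝒜))) ∪
        (causalPast ℬ \ (causalPast 𝒜 ∪ ℬ)) := by
  obtain ⟨h1, h2⟩ := hsp
  have hab : ∀ s, s ∈ causalPast 𝒜 → s ∉ ℬ := fun s h hb =>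
    (eq_empty_iff_forall_notMem.mp h1 s) ⟨h, hb⟩
  have hba : ∀ s, s ∈ causalPast ℬ → s ∉ 𝒜 := fun s h hb =>
    (eq_empty_iff_forall_notMem.mp h2 s) ⟨h, hb⟩
  ext s
  have ha := hab s; have hb := hba s
  simp only [mem_diff, mem_union, mem_inter_iff]
  tauto

lemma disj1 {𝒜 ℬ : Set S} :
    Disjoint ((causalPast 𝒜 ∩ causalPast ℬ) ∪ (causalPast 𝒜 \ (causalPast ℬ ∪ 𝒜)))
      (causalPast ℬ \ (causalPast 𝒜 ∪ ℬ)) := by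
  rw [Set.disjoint_left]
  rintro s (⟨h, _⟩ | ⟨h, _⟩) hs <;> exact hs.2 (Or.inl h)

lemma disj2 {𝒜 ℬ : Set S} :
    Disjoint (causalPast 𝒜 ∩ causalPast ℬ) (causalPast 𝒜 \ (causalPast ℬ ∪ 𝒜)) := by
  rw [Set.disjoint_left]
  rintro s ⟨_, h⟩ hs
  exact hs.2 (Or.inl h)

end Geom
lemma so2_imp_so1 {Ω S : Type*} [MeasurableSpace Ω] [PartialOrder S]
    (D : DomSystem Ω S) (μ : Measure Ω)
    (h2 : SO2 D.dom μ) : SO1 D.dom μ := by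
  intro A B hA hB 𝒜 ℬ hdA hdB hsp C hC hμC
  exact h2 A B hA hB (𝒜 ∪ (causalPast 𝒜 \ (causalPast ℬ ∪ 𝒜)))
    (ℬ ∪ (causalPast ℬ \ (causalPast 𝒜 ∪ ℬ)))
    (hdA.trans subset_union_left) (hdB.trans subset_union_left)
    (spacelike_prime hsp) C (by rw [joint_prime hsp]; exact hC) hμC
lemma so1_imp_so2 {Ω S : Type*} [MeasurableSpace Ω] [PartialOrder S]
    (D : DomSystem Ω S) (μ : Measure Ω) [IsProbabilityMeasure μ]
    (hres : ∀ A : Set Ω, MeasurableSet A → ∀ R : Set S,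
      MeasurableSet (restr D.dom R A) ∧ D.dom (restr D.dom R A) ⊆ R)
    (h1 : SO1 D.dom μ) : SO2 D.dom μ := by
  intro A B hA hB 𝒜 ℬ hdA hdB hsp C hC hμC
  set P1 := causalPast 𝒜 ∩ causalPast ℬ with hP1def
  set QA := causalPast 𝒜 \ (causalPast ℬ ∪ 𝒜) with hQAdef
  set QB := causalPast ℬ \ (causalPast 𝒜 ∪ ℬ) with hQBdef
  have hCm : MeasurableSet C := hC.1
  -- decomposition of C
  set CP := restr D.dom P1 C with hCPdef
  set CA := restr D.dom QA C with hCAdef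
  set CB := restr D.dom QB C with hCBdef
  have hsplit : (causalPast 𝒜 ∪ causalPast ℬ) \ (𝒜 ∪ ℬ) = (P1 ∪ QA) ∪ QB :=
    split_prime hsp
  have hCeq : C = (CP ∩ CA) ∩ CB := by
    have e1 : C = restr D.dom (P1 ∪ QA) C ∩ CB := fullSpec_split D hC disj1 hsplit
    have hC' : IsFullSpec D.dom (P1 ∪ QA) (restr D.dom (P1 ∪ QA) C) :=
      isFullSpec_restr D hres hC (by rw [hsplit]; exact subset_union_left)
    have e2 := fullSpec_split D hC' disj2 rfl
    rw [e1, e2, restr_restr D hres P1 subset_union_left hCm,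
      restr_restr D hres QA subset_union_right hCm]
  have hCP : IsFullSpec D.dom P1 CP :=
    isFullSpec_restr D hres hC
      (by rw [hsplit]; exact subset_union_left.trans subset_union_left)
  have hCAm : MeasurableSet CA := (hres C hCm QA).1
  have hCBm : MeasurableSet CB := (hres C hCm QB).1
  have hCAd : D.dom CA ⊆ QA := (hres C hCm QA).2
  have hCBd : D.dom CB ⊆ QB := (hres C hCm QB).2
  have hμCP : 0 < μ CP := lt_of_lt_of_le hμC (measure_mono (subset_restr _ _ _))
  -- the primed regions
  have hmut : causalPast (𝒜 ∪ QA) ∩ causalPast (ℬ ∪ QB) = P1 := by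
    rw [hQAdef, hQBdef, causalPast_prime, causalPast_prime (ℬ := 𝒜) (𝒜 := ℬ)]
  have key : ∀ X Y : Set Ω, MeasurableSet X → MeasurableSet Y →
      D.dom X ⊆ 𝒜 ∪ QA → D.dom Y ⊆ ℬ ∪ QB →
      μ ((X ∩ Y) ∩ CP) / μ CP = (μ (X ∩ CP) / μ CP) * (μ (Y ∩ CP) / μ CP) :=
    fun X Y hX hY hdX hdY =>
      h1 X Y hX hY (𝒜 ∪ QA) (ℬ ∪ QB) hdX hdY
        (by rw [hQAdef, hQBdef]; exact spacelike_prime hsp) CP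
        (by rw [hmut]; exact hCP) hμCP
  have dACA : D.dom (A ∩ CA) ⊆ 𝒜 ∪ QA :=
    dom_inter D hres hA hCAm (hdA.trans subset_union_left)
      (hCAd.trans subset_union_right)
  have dBCB : D.dom (B ∩ CB) ⊆ ℬ ∪ QB :=
    dom_inter D hres hB hCBm (hdB.trans subset_union_left)
      (hCBd.trans subset_union_right)
  have dCA : D.dom CA ⊆ 𝒜 ∪ QA := hCAd.trans subset_union_right
  have dCB : D.dom CB ⊆ ℬ ∪ QB := hCBd.trans subset_union_right
  have e1 := key (A ∩ CA) (B ∩ CB) (hA.inter hCAm) (hB.inter hCBm) dACA dBCB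
  have e2 := key (A ∩ CA) CB (hA.inter hCAm) hCBm dACA dCB
  have e3 := key CA (B ∩ CB) hCAm (hB.inter hCBm) dCA dBCB
  have e4 := key CA CB hCAm hCBm dCA dCB
  have s1 : ((A ∩ CA) ∩ (B ∩ CB)) ∩ CP = (A ∩ B) ∩ C := by
    rw [hCeq]; ext ω; simp only [mem_inter_iff]; tauto
  have s2 : ((A ∩ CA) ∩ CB) ∩ CP = A ∩ C := by
    rw [hCeq]; ext ω; simp only [mem_inter_iff]; tauto
  have s3 : (CA ∩ (B ∩ CB)) ∩ CP = B ∩ C := by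
    rw [hCeq]; ext ω; simp only [mem_inter_iff]; tauto
  have s4 : (CA ∩ CB) ∩ CP = C := by
    rw [hCeq]; ext ω; simp only [mem_inter_iff]; tauto
  rw [s1] at e1
  rw [s2] at e2
  rw [s3] at e3
  rw [s4] at e4
  -- arithmetic
  have hc0 : (0 : ℝ) < (μ CP).toReal := ENNReal.toReal_pos hμCP.ne' (measure_ne_top μ CP)
  have hM0 : (0 : ℝ) < (μ C).toReal := ENNReal.toReal_pos hμC.ne' (measure_ne_top μ C)
  have conv : ∀ {x y z : Set Ω}, μ x / μ CP = (μ y / μ CP) * (μ z / μ CP) →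
      (μ x).toReal * (μ CP).toReal = (μ y).toReal * (μ z).toReal := by
    intro x y z h
    have h' := congrArg ENNReal.toReal h
    rw [ENNReal.toReal_div, ENNReal.toReal_mul, ENNReal.toReal_div,
      ENNReal.toReal_div, div_mul_div_comm,
      div_eq_div_iff hc0.ne' (by positivity)] at h'
    apply mul_right_cancel₀ hc0.ne'
    linear_combination h'
  have E1 := conv e1
  have E2 := conv e2
  have E3 := conv e3
  have E4 := conv e4
  have hNM : (μ ((A ∩ B) ∩ C)).toReal * (μ C).toReal
      = (μ (A ∩ C)).toReal * (μ (B ∩ C)).toReal := by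
    have h5 : ((μ ((A ∩ B) ∩ C)).toReal * (μ C).toReal -
        (μ (A ∩ C)).toReal * (μ (B ∩ C)).toReal) *
        ((μ CP).toReal * (μ CP).toReal) = 0 := by
      linear_combination ((μ C).toReal * (μ CP).toReal) * E1 +
        ((μ ((A ∩ CA) ∩ CP)).toReal * (μ ((B ∩ CB) ∩ CP)).toReal) * E4 -
        ((μ (B ∩ C)).toReal * (μ CP).toReal) * E2 -
        ((μ ((A ∩ CA) ∩ CP)).toReal * (μ (CB ∩ CP)).toReal) * E3
    have h6 := (mul_eq_zero.mp h5).resolve_right (by positivity)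
    linarith [h6]
  have hne1 : μ ((A ∩ B) ∩ C) / μ C ≠ ⊤ :=
    (ENNReal.div_lt_top (measure_ne_top _ _) hμC.ne').ne
  have hne2 : (μ (A ∩ C) / μ C) * (μ (B ∩ C) / μ C) ≠ ⊤ :=
    ENNReal.mul_ne_top ((ENNReal.div_lt_top (measure_ne_top _ _) hμC.ne').ne)
      ((ENNReal.div_lt_top (measure_ne_top _ _) hμC.ne').ne)
  rw [← ENNReal.toReal_eq_toReal_iff' hne1 hne2, ENNReal.toReal_mul, ENNReal.toReal_div,
    ENNReal.toReal_div, ENNReal.toReal_div, div_mul_div_comm,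
    div_eq_div_iff hM0.ne' (by positivity)]
  linear_combination (μ C).toReal * hNM
/-- Corollary 2: SO1 is equivalent to SO2, assuming every region has only finitely
many full specifications, singletons are events, and restrictions of events are
events decidable in the restricting region. -/
theorem stmt10 {Ω S : Type*} [MeasurableSpace Ω] [PartialOrder S]
    (D : DomSystem Ω S) (μ : Measure Ω) [IsProbabilityMeasure μ]
    (hfin : ∀ R : Set S, {F : Set Ω | IsFullSpec D.dom R F}.Finite)
    (hsing : ∀ ω : Ω, MeasurableSet ({ω} : Set Ω))
    (hres : ∀ A : Set Ω, MeasurableSet A → ∀ R : Set S,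
      MeasurableSet (restr D.dom R A) ∧ D.dom (restr D.dom R A) ⊆ R) :
    SO1 D.dom μ ↔ SO2 D.dom μ :=
  ⟨so1_imp_so2 D μ hres, so2_imp_so1 D μ⟩
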